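/- For n ≥ 9, the quintic Ψ(x) = x⁵ − (n+5)x⁴ + (6n+4)x³ − (10n−2)x² + (3n+12)x − 4 has a root in each of the intervals [0, 0.3], [0.3, 1], and [1, 2.7]. -/

import Mathlib

/-! Ψ is affine in `n`, so its value at each endpoint is an affine function of `n` whose sign
is clear for `n ≥ 9`: `Ψ 0 = -4`, `Ψ 0.3 = 0.1539 n - 0.15007`, `Ψ 1 = 10 - 2n` and
`Ψ 2.7 = 0.1539 n - 0.51943`. The signs alternate, and the intermediate value theorem gives a
root in each of the three intervals. -/

def psi (n x : ℝ) : ℝ :=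
  x ^ 5 - (n + 5) * x ^ 4 + (6 * n + 4) * x ^ 3 - (10 * n - 2) * x ^ 2 + (3 * n + 12) * x - 4

section

variable (n : ℝ)

theorem continuous_psi : Continuous (psi n) := by
  unfold psi
  fun_prop

theorem psi_zero : psi n 0 = -4 := by
  norm_num [psi]

theorem psi_three_tenths : psi n 0.3 = 0.1539 * n - 0.15007 := by
  norm_num [psi]
  ring

theorem psi_one : psi n 1 = 10 - 2 * n := by
  norm_num [psi]
  ring

theorem psi_twenty_seven_tenths : psi n 2.7 = 0.1539 * n - 0.51943 := by
  norm_num [psi]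
  ring

end

theorem stmt_8 (n : ℝ) (hn : 9 ≤ n)
    (Ψ : ℝ → ℝ)
    (hΨ : ∀ x, Ψ x = x ^ 5 - (n + 5) * x ^ 4 + (6 * n + 4) * x ^ 3
      - (10 * n - 2) * x ^ 2 + (3 * n + 12) * x - 4) :
    (∃ x ∈ Set.Icc (0 : ℝ) 0.3, Ψ x = 0) ∧
      (∃ x ∈ Set.Icc (0.3 : ℝ) 1, Ψ x = 0) ∧
      (∃ x ∈ Set.Icc (1 : ℝ) 2.7, Ψ x = 0) := by
  obtain rfl : Ψ = psi n := funext hΨ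
  have h0 : psi n 0 ≤ 0 := by rw [psi_zero]; norm_num
  have h03 : 0 ≤ psi n 0.3 := by rw [psi_three_tenths]; linarith
  have h1 : psi n 1 ≤ 0 := by rw [psi_one]; linarith
  have h27 : 0 ≤ psi n 2.7 := by rw [psi_twenty_seven_tenths]; linarith
  have hc (a b : ℝ) : ContinuousOn (psi n) (Set.Icc a b) := (continuous_psi n).continuousOn
  exact ⟨intermediate_value_Icc (by norm_num) (hc _ _) ⟨h0, h03⟩,
    intermediate_value_Icc' (by norm_num) (hc _ _) ⟨h1, h03⟩,
    intermediate_value_Icc (by norm_num) (hc _ _) ⟨h1, h27⟩⟩
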